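/- arXiv:1304.0106 — 3 statements merged into one kernel-verified Lean document; each statement's English description precedes it below -/
import Mathlib

section
/- Let B be a complete Boolean algebra. Suppose there exist p ∈ B⁺ and a sequence ⟨bₙ : n∈ω⟩ in B with bₙ ≤ p for all n, such that for every infinite set A ⊆ ω both p ≤ ⨅_{k∈ω} ⨆_{n∈A, n≥k} bₙ and p ≤ ⨅_{k∈ω} ⨆_{n∈A, n≥k} (p ∖ bₙ) hold (this is the Boolean-valued statement that forcing by B produces an independent (splitting) real below p, namely a set τ ⊆ ω with bₙ = ‖n ∈ τ‖ ⊓ p such that p forces that τ splits every infinite ground-model subset of ω). Then White has a winning strategy in the game G₃ played on B. -/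
/-- For `p ∈ B⁺` and a move `q ≤ p`, Black's choice: `q⁰ = q`, `q¹ = p \ q`. -/
def pickMove {B : Type*} [CompleteBooleanAlgebra B] (p q : B) (i : Bool) : B :=
  if i then p \ q else q

section Games

variable {B : Type*} [CompleteBooleanAlgebra B]

/-- White wins a play of `G₁` iff `⨅ₙ pₙ^{iₙ} = 0`. -/
def WinG1 (p : B) (pn : ℕ → B) (i : ℕ → Bool) : Prop :=
  (⨅ n, pickMove p (pn n) (i n)) = ⊥

/-- White wins a play of `G₂` iff `⨆ₖ ⨅_{n ≥ k} pₙ^{iₙ} = 0`. -/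
def WinG2 (p : B) (pn : ℕ → B) (i : ℕ → Bool) : Prop :=
  (⨆ k, ⨅ n, ⨅ _ : k ≤ n, pickMove p (pn n) (i n)) = ⊥

/-- White wins a play of `G₃` iff `⨆_{A ⊆ ω infinite} ⨅_{n ∈ A} pₙ^{iₙ} = 0`. -/
def WinG3 (p : B) (pn : ℕ → B) (i : ℕ → Bool) : Prop :=
  (⨆ A ∈ {A : Set ℕ | A.Infinite}, ⨅ n ∈ A, pickMove p (pn n) (i n)) = ⊥

/-- White wins a play of `G₄` iff `⨅ₖ ⨆_{n ≥ k} pₙ^{iₙ} = 0`. -/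
def WinG4 (p : B) (pn : ℕ → B) (i : ℕ → Bool) : Prop :=
  (⨅ k, ⨆ n, ⨆ _ : k ≤ n, pickMove p (pn n) (i n)) = ⊥

/-- White's moves when following strategy `σ` against Black's play `i`:
the `n`-th move depends on Black's first `n` moves. -/
def whitePlays (σ : List Bool → B) (i : ℕ → Bool) (n : ℕ) : B :=
  σ (List.ofFn fun k : Fin n => i k)

/-- Black's moves when following strategy `τ` against White's play `p, p₀, p₁, …`:
the `n`-th move depends on `p` and on `p₀, …, pₙ`. -/
def blackPlays (τ : B → List B → Bool) (p : B) (pn : ℕ → B) (n : ℕ) : Bool :=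
  τ p (List.ofFn fun k : Fin (n + 1) => pn k)

/-- White has a winning strategy in the game with winning condition `Win`:
an initial move `p ∈ B⁺` and a rule `σ` giving legal moves in `(0,p)`
such that White wins every play in which he follows it. -/
def WhiteWS (Win : B → (ℕ → B) → (ℕ → Bool) → Prop) : Prop :=
  ∃ p : B, p ≠ ⊥ ∧ ∃ σ : List Bool → B,
    (∀ s : List Bool, σ s ∈ Set.Ioo ⊥ p) ∧
    ∀ i : ℕ → Bool, Win p (whitePlays σ i) i

/-- Black has a winning strategy in the game with winning condition `Win`:
a rule `τ` such that for every legal play of White, Black following `τ` wins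
(i.e. White does not win). -/
def BlackWS (Win : B → (ℕ → B) → (ℕ → Bool) → Prop) : Prop :=
  ∃ τ : B → List B → Bool,
    ∀ p : B, p ≠ ⊥ → ∀ pn : ℕ → B, (∀ n, pn n ∈ Set.Ioo ⊥ p) →
      ¬ Win p pn (blackPlays τ p pn)

/-- `aⁱ` for `i ∈ {0,1}`: `a⁰ = a`, `a¹ = aᶜ`. -/
def compPow (a : B) (i : Bool) : B :=
  if i then aᶜ else a

end Games

/-- A complete Boolean algebra is `(ω,2)`-distributive iff
`⨆_{f : ω → 2} ⨅ₙ aₙ^{f(n)} = 1` for every sequence `⟨aₙ⟩`. -/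
def OmegaTwoDistributive (B : Type*) [CompleteBooleanAlgebra B] : Prop :=
  ∀ a : ℕ → B, (⨆ f : ℕ → Bool, ⨅ n, compPow (a n) (f n)) = ⊤

/-- `w : 2^{<ω} → B` satisfies (∗) below `p`: for every `i : ω → 2`,
`⨆_{A ⊆ ω infinite} ⨅_{n ∈ A} w_{i↾n}^{i(n)} = 0`. -/
def SatisfiesStar {B : Type*} [CompleteBooleanAlgebra B] (p : B) (w : List Bool → B) : Prop :=
  ∀ i : ℕ → Bool,
    (⨆ A ∈ {A : Set ℕ | A.Infinite}, ⨅ n ∈ A,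
      pickMove p (w (List.ofFn fun k : Fin n => i k)) (i n)) = ⊥

/-!
White opens with `p` and answers with `bₙ` at move `n`, after skipping the finitely many `n`
with `bₙ ∈ {0, p}` (splitting rules out infinitely many of them). For any play of Black and any
infinite `A`, Black chooses one side `j` on an infinite `A' ⊆ A`; the meet over `A` lies below
every `bₙ^j` with `n ∈ A'`, while the opposite sides `bₙ^{1-j}`, `n ∈ A'`, cover `p` by
splitting, so the meet is `0`.
-/

theorem Set.Infinite.exists_infinite_fiber {α β : Type*} [Finite β] {s : Set α}
    (hs : s.Infinite) (f : α → β) : ∃ y, {x ∈ s | f x = y}.Infinite := by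
  by_contra! h
  exact hs <| (Set.finite_iUnion h).subset fun x hx => Set.mem_iUnion.2 ⟨f x, hx, rfl⟩

section Splitting

variable {B : Type*} [CompleteBooleanAlgebra B] {p q : B} {b : ℕ → B}

lemma pickMove_le (hq : q ≤ p) (i : Bool) : pickMove p q i ≤ p := by
  cases i
  · exact hq
  · exact sdiff_le

lemma disjoint_pickMove_not (p q : B) (i : Bool) :
    Disjoint (pickMove p q i) (pickMove p q !i) := by
  cases i
  · exact disjoint_sdiff_self_right
  · exact disjoint_sdiff_self_left

def IsSplittingBelow (p : B) (b : ℕ → B) : Prop :=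
  ∀ A : Set ℕ, A.Infinite → ∀ j, p ≤ ⨆ n ∈ A, pickMove p (b n) j

lemma isSplittingBelow_of_le_limsup
    (h : ∀ A : Set ℕ, A.Infinite →
      p ≤ (⨅ k, ⨆ n ∈ A, ⨆ _ : k ≤ n, b n) ∧
      p ≤ (⨅ k, ⨆ n ∈ A, ⨆ _ : k ≤ n, p \ b n)) :
    IsSplittingBelow p b := by
  intro A hA j
  have hk₀ : ∀ c : ℕ → B, (⨅ k, ⨆ n ∈ A, ⨆ _ : k ≤ n, c n) ≤ ⨆ n ∈ A, c n :=
    fun c => (iInf_le _ 0).trans <| iSup₂_mono fun n _ => iSup_le fun _ => le_rfl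
  cases j
  · exact (h A hA).1.trans (hk₀ b)
  · exact (h A hA).2.trans (hk₀ (p \ b ·))

namespace IsSplittingBelow

lemma comp_add_right (h : IsSplittingBelow p b) (M : ℕ) :
    IsSplittingBelow p (fun n => b (n + M)) := by
  intro A hA j
  have hA' : ((· + M) '' A).Infinite := hA.image fun _ _ _ _ => Nat.add_right_cancel
  simpa only [iSup_image] using h _ hA' j

lemma finite_pickMove_eq_bot (h : IsSplittingBelow p b) (hp : p ≠ ⊥) (j : Bool) :
    {n | pickMove p (b n) j = ⊥}.Finite := by
  by_contra hinf
  exact hp <| le_bot_iff.1 <| (h _ hinf j).trans <| iSup₂_le fun n hn => le_of_eq hn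

lemma eventually_mem_Ioo (h : IsSplittingBelow p b) (hp : p ≠ ⊥) (hb : ∀ n, b n ≤ p) :
    ∀ᶠ n in Filter.atTop, b n ∈ Set.Ioo ⊥ p := by
  rw [← Nat.cofinite_eq_atTop]
  filter_upwards [(h.finite_pickMove_eq_bot hp false).eventually_cofinite_notMem,
    (h.finite_pickMove_eq_bot hp true).eventually_cofinite_notMem] with n hpos hlt
  refine ⟨bot_lt_iff_ne_bot.2 hpos, (hb n).lt_of_ne fun heq => hlt ?_⟩
  simp [pickMove, heq]

lemma iInf_pickMove_eq_bot (h : IsSplittingBelow p b) (hb : ∀ n, b n ≤ p) (i : ℕ → Bool)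
    {A : Set ℕ} (hA : A.Infinite) : ⨅ n ∈ A, pickMove p (b n) (i n) = ⊥ := by
  obtain ⟨j, hj⟩ := hA.exists_infinite_fiber i
  obtain ⟨n₀, hn₀⟩ := hj.nonempty
  set c := ⨅ n ∈ A, pickMove p (b n) (i n)
  have hc : ∀ n ∈ {n ∈ A | i n = j}, c ≤ pickMove p (b n) j := fun n ⟨hnA, hn⟩ =>
    hn ▸ iInf₂_le n hnA
  have hcp : c ≤ p := (hc n₀ hn₀).trans (pickMove_le (hb n₀) j)
  refine Disjoint.eq_bot_of_le ?_ (hcp.trans (h _ hj !j))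
  exact disjoint_iSup₂_iff.2 fun n hn => (disjoint_pickMove_not _ _ j).mono_left (hc n hn)

end IsSplittingBelow

end Splitting

/-- If forcing by `B` produces an independent (splitting) real below some `p ∈ B⁺`
(expressed Boolean-valued: `⟨bₙ⟩` with `bₙ ≤ p` such that for every infinite `A ⊆ ω`,
`p ≤ ⨅ₖ ⨆_{n ∈ A, n ≥ k} bₙ` and `p ≤ ⨅ₖ ⨆_{n ∈ A, n ≥ k} (p ∖ bₙ)`),
then White has a winning strategy in the game `G₃` on `B`. -/
theorem stmt_7 {B : Type*} [CompleteBooleanAlgebra B] (p : B) (hp : p ≠ ⊥)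
    (b : ℕ → B) (hb : ∀ n, b n ≤ p)
    (hsplit : ∀ A : Set ℕ, A.Infinite →
      p ≤ (⨅ k, ⨆ n ∈ A, ⨆ _ : k ≤ n, b n) ∧
      p ≤ (⨅ k, ⨆ n ∈ A, ⨆ _ : k ≤ n, p \ b n)) :
    WhiteWS (WinG3 (B := B)) := by
  have h := isSplittingBelow_of_le_limsup hsplit
  obtain ⟨M, hM⟩ := Filter.eventually_atTop.1 (h.eventually_mem_Ioo hp hb)
  refine ⟨p, hp, fun s => b (s.length + M), fun s => hM _ (Nat.le_add_left M _), fun i => ?_⟩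
  refine iSup₂_eq_bot.2 fun A hA => ?_
  simpa [whitePlays] using (h.comp_add_right M).iInf_pickMove_eq_bot (fun n => hb _) i hA
end

section
/- Let B be an (ω,2)-distributive complete Boolean algebra. Then Black has a winning strategy in the game G₃ on B if and only if Black has a winning strategy in the game G₄ on B. -/
lemma key {B : Type*} [CompleteBooleanAlgebra B] (hd : OmegaTwoDistributive B) (x : ℕ → B) :
    (⨆ A ∈ {A : Set ℕ | A.Infinite}, ⨅ n ∈ A, x n) = ⨅ k, ⨆ n, ⨆ _ : k ≤ n, x n := by
  apply le_antisymm
  · refine iSup₂_le fun A hA => le_iInf fun k => ?_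
    obtain ⟨n, hn, hkn⟩ := hA.exists_gt k
    exact le_trans (biInf_le _ hn) (le_iSup₂ (f := fun n (_ : k ≤ n) => x n) n hkn.le)
  · have h := hd x
    calc (⨅ k, ⨆ n, ⨆ _ : k ≤ n, x n)
        = (⨅ k, ⨆ n, ⨆ _ : k ≤ n, x n) ⊓ ⨆ f : ℕ → Bool, ⨅ n, compPow (x n) (f n) := by
          rw [h, inf_top_eq]
      _ = ⨆ f : ℕ → Bool, (⨅ k, ⨆ n, ⨆ _ : k ≤ n, x n) ⊓ ⨅ n, compPow (x n) (f n) :=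
          inf_iSup_eq _ _
      _ ≤ _ := by
          refine iSup_le fun f => ?_
          by_cases hA : {n | f n = false}.Infinite
          · refine le_trans inf_le_right ?_
            refine le_trans ?_ (le_iSup₂ (f := fun A (_ : (A : Set ℕ).Infinite) => ⨅ n ∈ A, x n) _ hA)
            refine le_iInf₂ fun n hn => ?_
            refine le_trans (iInf_le _ n) ?_
            simp only [Set.mem_setOf_eq] at hn
            simp [compPow, hn]
          · rw [Set.not_infinite] at hA
            obtain ⟨N, hN⟩ := hA.bddAbove
            have h1 : (⨅ k, ⨆ n, ⨆ _ : k ≤ n, x n) ⊓ (⨅ n, compPow (x n) (f n))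
                ≤ (⨆ n, ⨆ _ : N + 1 ≤ n, x n) ⊓ (⨆ n, ⨆ _ : N + 1 ≤ n, x n)ᶜ := by
              refine inf_le_inf (iInf_le _ _) ?_
              rw [← compl_le_compl_iff_le, compl_compl]
              rw [compl_iInf]
              refine iSup₂_le fun n hn => ?_
              have hfn : f n = true := by
                by_contra hf
                have hmem : n ∈ {n | f n = false} := by
                  simp only [Set.mem_setOf_eq, Bool.not_eq_true] at hf ⊢; exact hf
                exact absurd (hN hmem) (by omega)
              refine le_trans ?_ (le_iSup _ n)
              simp [compPow, hfn]
            simpa using le_trans h1 (by simp)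

/-- Over an `(ω,2)`-distributive complete Boolean algebra, Black has a winning
strategy in `G₃` iff Black has a winning strategy in `G₄`. -/
theorem stmt_9 {B : Type*} [CompleteBooleanAlgebra B] (hd : OmegaTwoDistributive B) :
    BlackWS (WinG3 (B := B)) ↔ BlackWS (WinG4 (B := B)) := by
  have heq : ∀ (p : B) (pn : ℕ → B) (i : ℕ → Bool), WinG3 p pn i ↔ WinG4 p pn i := by
    intro p pn i
    unfold WinG3 WinG4
    rw [key hd (fun n => pickMove p (pn n) (i n))]
  constructor
  · rintro ⟨τ, h⟩
    exact ⟨τ, fun p hp pn hpn hw => h p hp pn hpn ((heq _ _ _).mpr hw)⟩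
  · rintro ⟨τ, h⟩
    exact ⟨τ, fun p hp pn hpn hw => h p hp pn hpn ((heq _ _ _).mp hw)⟩
end

section
/- Let B be a complete Boolean algebra which is (ω,2)-distributive and on which Black has no winning strategy in the game G₄. Then all four games G₁, G₂, G₃ and G₄ are undetermined on B: in each of them, neither White nor Black has a winning strategy. -/
section Aux

variable {B : Type*} [CompleteBooleanAlgebra B]

lemma win21 {p : B} {pn : ℕ → B} {i : ℕ → Bool} (h : WinG2 p pn i) : WinG1 p pn i := by
  unfold WinG1; unfold WinG2 at h
  refine le_bot_iff.mp ?_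
  rw [← h]
  refine le_trans ?_ (le_iSup _ 0)
  exact le_iInf fun n => le_iInf fun _ => iInf_le _ n

lemma win32 {p : B} {pn : ℕ → B} {i : ℕ → Bool} (h : WinG3 p pn i) : WinG2 p pn i := by
  unfold WinG2; unfold WinG3 at h
  refine le_bot_iff.mp ?_
  rw [← h]
  refine iSup_le fun k => ?_
  refine le_trans ?_ (le_iSup₂ (f := fun (A : Set ℕ) (_ : A ∈ {A : Set ℕ | A.Infinite}) =>
    ⨅ n ∈ A, pickMove p (pn n) (i n)) (Set.Ici k) (Set.Ici_infinite k))
  exact le_iInf₂ fun n hn => iInf₂_le n hn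

lemma win43 {p : B} {pn : ℕ → B} {i : ℕ → Bool} (h : WinG4 p pn i) : WinG3 p pn i := by
  unfold WinG3; unfold WinG4 at h
  refine le_bot_iff.mp ?_
  rw [← h]
  refine iSup₂_le fun A hA => le_iInf fun k => ?_
  obtain ⟨n, hnA, hkn⟩ := Set.Infinite.exists_gt hA k
  exact le_trans (iInf₂_le n hnA) (le_iSup₂ (f := fun n (_ : k ≤ n) =>
    pickMove p (pn n) (i n)) n hkn.le)

lemma whiteMono {W W' : B → (ℕ → B) → (ℕ → Bool) → Prop}
    (h : ∀ p pn i, W p pn i → W' p pn i) : WhiteWS W → WhiteWS W' := by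
  rintro ⟨p, hp, σ, hσ, hw⟩
  exact ⟨p, hp, σ, hσ, fun i => h _ _ _ (hw i)⟩

lemma blackMono {W W' : B → (ℕ → B) → (ℕ → Bool) → Prop}
    (h : ∀ p pn i, W' p pn i → W p pn i) : BlackWS W → BlackWS W' := by
  rintro ⟨τ, hτ⟩
  exact ⟨τ, fun p hp pn hpn hw => hτ p hp pn hpn (h _ _ _ hw)⟩

lemma noWhite1 (hd : OmegaTwoDistributive B) : ¬ WhiteWS (WinG1 (B := B)) := by
  rintro ⟨p, hp, σ, hσ, hwin⟩
  set a : ℕ → B := fun m => σ ((Encodable.decode m).getD []) with ha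
  have hsup : (⨆ f : ℕ → Bool, p ⊓ ⨅ n, compPow (a n) (f n)) = p := by
    rw [← inf_iSup_eq, hd a, inf_top_eq]
  have hex : ∃ g : ℕ → Bool, p ⊓ (⨅ n, compPow (a n) (g n)) ≠ ⊥ := by
    by_contra hcon
    push_neg at hcon
    apply hp
    rw [← hsup]
    exact iSup_eq_bot.mpr hcon
  obtain ⟨g, hg⟩ := hex
  set L : ℕ → List Bool := fun n =>
    Nat.rec [] (fun _ l => l ++ [g (Encodable.encode l)]) n with hLdef
  set i : ℕ → Bool := fun n => g (Encodable.encode (L n)) with hi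
  have hL : ∀ n, (List.ofFn fun k : Fin n => i k) = L n := by
    intro n
    induction n with
    | zero => simp [hLdef]
    | succ n ih =>
      rw [List.ofFn_succ']
      have : (List.ofFn fun k : Fin n => i ↑k.castSucc) = L n := by
        simpa using ih
      simp only [this]
      simp [hLdef, List.concat_eq_append, hi]
  set r : B := p ⊓ ⨅ n, compPow (a n) (g n) with hr
  have hle : ∀ n, r ≤ pickMove p (whitePlays σ i n) (i n) := by
    intro n
    have hwp : whitePlays σ i n = a (Encodable.encode (L n)) := by
      simp [whitePlays, hL n, ha, Encodable.encodek]
    rw [hwp]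
    set m := Encodable.encode (L n) with hm
    have him : i n = g m := rfl
    have h1 : r ≤ compPow (a m) (g m) :=
      le_trans inf_le_right (iInf_le _ m)
    have h2 : r ≤ p := inf_le_left
    rw [him]
    cases hgm : g m with
    | false =>
      have := h1; rw [hgm] at this
      simpa [pickMove, compPow] using this
    | true =>
      have := h1; rw [hgm] at this
      simp only [pickMove, compPow, if_true] at this ⊢
      rw [sdiff_eq]
      exact le_inf h2 this
  have := hwin i
  unfold WinG1 at this
  exact hg (le_bot_iff.mp (this ▸ le_iInf hle))

end Aux

/-- If `B` is `(ω,2)`-distributive and Black has no winning strategy in `G₄`,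
then all four games `G₁, G₂, G₃, G₄` are undetermined on `B`. -/
theorem stmt_10 {B : Type*} [CompleteBooleanAlgebra B] (hd : OmegaTwoDistributive B)
    (hb : ¬ BlackWS (WinG4 (B := B))) :
    (¬ WhiteWS (WinG1 (B := B)) ∧ ¬ BlackWS (WinG1 (B := B))) ∧
    (¬ WhiteWS (WinG2 (B := B)) ∧ ¬ BlackWS (WinG2 (B := B))) ∧
    (¬ WhiteWS (WinG3 (B := B)) ∧ ¬ BlackWS (WinG3 (B := B))) ∧
    (¬ WhiteWS (WinG4 (B := B)) ∧ ¬ BlackWS (WinG4 (B := B))) := by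
  have h21 : ∀ (p : B) pn i, WinG2 p pn i → WinG1 p pn i := fun _ _ _ => win21
  have h31 : ∀ (p : B) pn i, WinG3 p pn i → WinG1 p pn i := fun _ _ _ h => win21 (win32 h)
  have h41 : ∀ (p : B) pn i, WinG4 p pn i → WinG1 p pn i := fun _ _ _ h => win21 (win32 (win43 h))
  have hw1 := noWhite1 hd
  refine ⟨⟨hw1, fun h => hb (blackMono h41 h)⟩,
    ⟨fun h => hw1 (whiteMono h21 h), fun h => hb (blackMono (fun _ _ _ h' => win32 (win43 h')) h)⟩,
    ⟨fun h => hw1 (whiteMono h31 h), fun h => hb (blackMono (fun _ _ _ h' => win43 h') h)⟩,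
    ⟨fun h => hw1 (whiteMono h41 h), fun h => hb h⟩⟩
end
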